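/- With notation as above, for all μ, ν ∈ P(X) the function t ↦ M̂(μ, ν, t) is continuous on (0,∞). -/

import Mathlib

open Set MeasureTheory Filter Topology

noncomputable section

/-- The Łukasiewicz t-norm. -/
def luk (a b : ℝ) : ℝ := max (a + b - 1) 0

/-- A continuous t-norm on `[0,1]`. -/
structure IsContinuousTNorm (star : ℝ → ℝ → ℝ) : Prop where
  maps_to : ∀ a b, a ∈ Icc (0:ℝ) 1 → b ∈ Icc (0:ℝ) 1 → star a b ∈ Icc (0:ℝ) 1
  comm : ∀ a b, a ∈ Icc (0:ℝ) 1 → b ∈ Icc (0:ℝ) 1 → star a b = star b a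
  assoc : ∀ a b c, a ∈ Icc (0:ℝ) 1 → b ∈ Icc (0:ℝ) 1 → c ∈ Icc (0:ℝ) 1 →
    star (star a b) c = star a (star b c)
  continuous : ContinuousOn (fun p : ℝ × ℝ => star p.1 p.2) (Icc 0 1 ×ˢ Icc 0 1)
  one_right : ∀ a, a ∈ Icc (0:ℝ) 1 → star a 1 = a
  mono : ∀ a b c d, a ∈ Icc (0:ℝ) 1 → b ∈ Icc (0:ℝ) 1 → c ∈ Icc (0:ℝ) 1 →
    d ∈ Icc (0:ℝ) 1 → a ≤ c → b ≤ d → star a b ≤ star c d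

/-- A fuzzy metric (George–Veeramani) with respect to a t-norm `star`. -/
structure IsFuzzyMetric {X : Type*} (M : X → X → ℝ → ℝ) (star : ℝ → ℝ → ℝ) : Prop where
  pos : ∀ x y t, 0 < t → 0 < M x y t
  le_one : ∀ x y t, 0 < t → M x y t ≤ 1
  eq_one_iff : ∀ x y t, 0 < t → (M x y t = 1 ↔ x = y)
  symm : ∀ x y t, 0 < t → M x y t = M y x t
  triangle : ∀ x y z t s, 0 < t → 0 < s → star (M x y t) (M y z s) ≤ M x z (t + s)
  continuousOn : ∀ x y, ContinuousOn (fun t => M x y t) (Ioi (0:ℝ))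

/-- The open ball `B(x,r,t)` in a fuzzy metric space. -/
def fmBall {X : Type*} (M : X → X → ℝ → ℝ) (x : X) (r t : ℝ) : Set X :=
  {y | 1 - r < M x y t}

/-- The `r,t`-expansion `A^{r,t}` of a set `A`. -/
def fmExpand {X : Type*} (M : X → X → ℝ → ℝ) (A : Set X) (r t : ℝ) : Set X :=
  ⋃ x ∈ A, fmBall M x r t

/-- The fuzzy metric `M` generates the given topology on `X`. -/
def GeneratesTopology {X : Type*} [TopologicalSpace X] (M : X → X → ℝ → ℝ) : Prop :=
  TopologicalSpace.IsTopologicalBasis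
    {s : Set X | ∃ x r t, 0 < r ∧ r < 1 ∧ 0 < t ∧ s = fmBall M x r t}

/-- The set of admissible radii in the definition of the fuzzy Prokhorov metric. -/
def prokSet {X : Type*} [MeasurableSpace X] (M : X → X → ℝ → ℝ)
    (μ ν : Measure X) (t : ℝ) : Set ℝ :=
  {r | 0 < r ∧ r < 1 ∧ ∀ A : Set X, MeasurableSet A →
    μ A ≤ ν (fmExpand M A r t) + ENNReal.ofReal r ∧
    ν A ≤ μ (fmExpand M A r t) + ENNReal.ofReal r}

/-- The fuzzy Prokhorov function `M̂` on measures. -/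
def fuzzyProkhorov {X : Type*} [MeasurableSpace X] (M : X → X → ℝ → ℝ)
    (μ ν : Measure X) (t : ℝ) : ℝ :=
  1 - sInf (prokSet M μ ν t)

/-
The Łukasiewicz triangle inequality, applied along `x' → x → y → y'`, bounds `M x' y' t` between
`M x y (t - 2s) - 2r` and `M x y (t + 2s) + 2r` when `x', y'` lie in the balls of radius `r` and
parameter `s` about `x, y`. Hence `M` is jointly continuous on `(0,∞) × X × X`, and compactness of
`X × X` makes `t ↦ M(·,·,t)` continuous for the sup norm and `M(·,·,t)` bounded away from `0`; the
latter makes radii close to `1` admissible. Finally, if `M(·,·,t₁) ≤ M(·,·,t₂) + ε` everywhere then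
`A^{r,t₁} ⊆ A^{r+ε,t₂}`, so every admissible radius at `t₁`, shifted by `ε`, is admissible at `t₂`
(or is at least `1`), whence `M̂(t₁) - ε ≤ M̂(t₂)`.
-/

lemma tendstoUniformly_nhds_of_forall_continuousAt {α β γ : Type*} [TopologicalSpace α]
    [TopologicalSpace β] [CompactSpace β] [PseudoMetricSpace γ] {f : α × β → γ} {a : α}
    (hf : ∀ b, ContinuousAt f (a, b)) :
    TendstoUniformly (fun x b => f (x, b)) (fun b => f (a, b)) (𝓝 a) := by
  refine Metric.tendstoUniformly_iff.mpr fun ε hε => ?_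
  have key : ∀ b ∈ univ, ∀ᶠ z : α × β in 𝓝 (a, b), dist (f (a, z.2)) (f (z.1, z.2)) < ε := by
    intro b _
    have hnear := Metric.tendsto_nhds.mp (hf b) (ε / 2) (half_pos hε)
    have hslice := Metric.tendsto_nhds.mp
      ((hf b).comp (f := fun z : α × β => (a, z.2)) (x := (a, b)) (by fun_prop))
      (ε / 2) (half_pos hε)
    filter_upwards [hnear, hslice] with z h₁ h₂
    exact (dist_triangle_right _ _ _).trans_lt (add_halves ε ▸ add_lt_add h₂ h₁)
  filter_upwards [isCompact_univ.eventually_forall_of_forall_eventually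
    (P := fun x b => dist (f (a, b)) (f (x, b)) < ε) key] with x hx b
  exact hx b (mem_univ b)

namespace IsFuzzyMetric

variable {X : Type*} {M : X → X → ℝ → ℝ}

lemma self_eq_one (hM : IsFuzzyMetric M luk) (x : X) {t : ℝ} (ht : 0 < t) : M x x t = 1 :=
  (hM.eq_one_iff x x t ht).mpr rfl

lemma add_add_sub_two_le (hM : IsFuzzyMetric M luk) (x a b y : X) {s u s' : ℝ}
    (hs : 0 < s) (hu : 0 < u) (hs' : 0 < s') :
    M x a s + M a b u + M b y s' - 2 ≤ M x y (s + u + s') := by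
  have h₁ : M x a s + M a b u - 1 ≤ M x b (s + u) :=
    (le_max_left _ _).trans (hM.triangle x a b s u hs hu)
  have h₂ : M x b (s + u) + M b y s' - 1 ≤ M x y (s + u + s') :=
    (le_max_left _ _).trans (hM.triangle x b y (s + u) s' (by positivity) hs')
  linarith

lemma mem_fmBall_self (hM : IsFuzzyMetric M luk) (x : X) {r t : ℝ} (hr : 0 < r) (ht : 0 < t) :
    x ∈ fmBall M x r t := by
  change 1 - r < M x x t
  rw [hM.self_eq_one x ht]
  linarith

lemma fmBall_mem_nhds [TopologicalSpace X] (hM : IsFuzzyMetric M luk)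
    (hgen : GeneratesTopology M) (x : X) {r t : ℝ} (hr₀ : 0 < r) (hr₁ : r < 1) (ht : 0 < t) :
    fmBall M x r t ∈ 𝓝 x :=
  (hgen.isOpen ⟨x, r, t, hr₀, hr₁, ht, rfl⟩).mem_nhds (hM.mem_fmBall_self x hr₀ ht)

lemma sub_lt_and_lt_add_of_mem_fmBall (hM : IsFuzzyMetric M luk) {x x' y y' : X} {r s t : ℝ}
    (hs : 0 < s) (hst : 2 * s < t) (hx : x' ∈ fmBall M x r s) (hy : y' ∈ fmBall M y r s) :
    M x y (t - 2 * s) - 2 * r < M x' y' t ∧ M x' y' t < M x y (t + 2 * s) + 2 * r := by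
  have hx' : 1 - r < M x x' s := hx
  have hy' : 1 - r < M y y' s := hy
  have hlow := hM.add_add_sub_two_le x' x y y' hs (by linarith : 0 < t - 2 * s) hs
  have hup := hM.add_add_sub_two_le x x' y' y hs (by linarith : 0 < t) hs
  rw [hM.symm x' x s hs, show s + (t - 2 * s) + s = t by ring] at hlow
  rw [hM.symm y' y s hs, show s + t + s = t + 2 * s by ring] at hup
  constructor <;> linarith

theorem continuousOn_uncurry [TopologicalSpace X] (hM : IsFuzzyMetric M luk)
    (hgen : GeneratesTopology M) :
    ContinuousOn (fun q : ℝ × (X × X) => M q.2.1 q.2.2 q.1) (Ioi 0 ×ˢ univ) := by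
  refine continuousOn_of_forall_continuousAt fun ⟨t₀, x, y⟩ hq => ?_
  have ht₀ : 0 < t₀ := hq.1
  refine Metric.tendsto_nhds.mpr fun ε hε => ?_
  obtain ⟨η, hη, hcont⟩ := Metric.continuousAt_iff.mp
    ((hM.continuousOn x y).continuousAt (Ioi_mem_nhds ht₀)) (ε / 2) (half_pos hε)
  -- `δ ≤ t₀` keeps the parameter `t - 2 * (δ / 8)` of the lower bound positive.
  set δ := min η t₀
  have hδ : 0 < δ := lt_min hη ht₀
  set r := min (ε / 4) (1 / 2)
  have hr₀ : 0 < r := lt_min (by positivity) one_half_pos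
  have hr₁ : r < 1 := (min_le_right _ _).trans_lt one_half_lt_one
  have hrε : r ≤ ε / 4 := min_le_left _ _
  have hs : 0 < δ / 8 := by positivity
  have hnhds := prod_mem_nhds (Metric.ball_mem_nhds t₀ (half_pos hδ))
    (prod_mem_nhds (hM.fmBall_mem_nhds hgen x hr₀ hr₁ hs) (hM.fmBall_mem_nhds hgen y hr₀ hr₁ hs))
  filter_upwards [hnhds] with ⟨t, x', y'⟩ ⟨ht, hx', hy'⟩
  have htδ : |t - t₀| < δ / 2 := ht
  have hδη : δ ≤ η := min_le_left _ _
  have hδt : δ ≤ t₀ := min_le_right _ _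
  obtain ⟨hlow, hup⟩ := hM.sub_lt_and_lt_add_of_mem_fmBall (t := t) hs
    (by linarith [(abs_lt.mp htδ).1]) hx' hy'
  have hclose : ∀ t', |t' - t₀| < δ → |M x y t' - M x y t₀| < ε / 2 :=
    fun t' h => hcont (h.trans_le hδη)
  have h₁ := abs_lt.mp (hclose (t - 2 * (δ / 8)) (by
    rw [abs_lt] at htδ ⊢; constructor <;> linarith))
  have h₂ := abs_lt.mp (hclose (t + 2 * (δ / 8)) (by
    rw [abs_lt] at htδ ⊢; constructor <;> linarith))
  change |M x' y' t - M x y t₀| < ε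
  rw [abs_lt]
  constructor <;> linarith

lemma exists_pos_le [TopologicalSpace X] [CompactSpace X] [Nonempty X]
    (hM : IsFuzzyMetric M luk) (hgen : GeneratesTopology M) {t : ℝ} (ht : 0 < t) :
    ∃ c > 0, ∀ x y, c ≤ M x y t := by
  have hcont : Continuous fun p : X × X => M p.1 p.2 t :=
    (hM.continuousOn_uncurry hgen).comp_continuous (continuous_const.prodMk continuous_id)
      fun _ => ⟨ht, trivial⟩
  obtain ⟨p, -, hp⟩ := isCompact_univ.exists_isMinOn univ_nonempty hcont.continuousOn
  exact ⟨M p.1 p.2 t, hM.pos _ _ _ ht, fun x y => hp (mem_univ (x, y))⟩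

end IsFuzzyMetric

section Prokhorov

variable {X : Type*} {M : X → X → ℝ → ℝ}

lemma fmExpand_eq_univ {A : Set X} {r t : ℝ} (hA : A.Nonempty)
    (h : ∀ x y, 1 - r < M x y t) : fmExpand M A r t = univ := by
  obtain ⟨a, ha⟩ := hA
  exact eq_univ_of_forall fun y => mem_iUnion₂.mpr ⟨a, ha, h a y⟩

lemma fmExpand_subset_fmExpand {t₁ t₂ ε : ℝ} (hcmp : ∀ x y, M x y t₁ ≤ M x y t₂ + ε)
    (A : Set X) (r : ℝ) : fmExpand M A r t₁ ⊆ fmExpand M A (r + ε) t₂ :=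
  iUnion₂_mono fun x _ y (hy : 1 - r < M x y t₁) =>
    show 1 - (r + ε) < M x y t₂ by linarith [hcmp x y]

variable [MeasurableSpace X]

lemma mem_prokSet_of_forall_lt {μ ν : Measure X} [IsProbabilityMeasure μ]
    [IsProbabilityMeasure ν] {r t : ℝ} (hr₀ : 0 < r) (hr₁ : r < 1)
    (h : ∀ x y, 1 - r < M x y t) : r ∈ prokSet M μ ν t := by
  have key : ∀ (κ ρ : Measure X) [IsProbabilityMeasure κ] [IsProbabilityMeasure ρ] (A : Set X),
      κ A ≤ ρ (fmExpand M A r t) + ENNReal.ofReal r := by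
    intro κ ρ _ _ A
    rcases A.eq_empty_or_nonempty with rfl | hA
    · simp
    · rw [fmExpand_eq_univ hA h, measure_univ]
      exact prob_le_one.trans le_self_add
  exact ⟨hr₀, hr₁, fun A _ => ⟨key μ ν A, key ν μ A⟩⟩

lemma prokSet_nonempty [TopologicalSpace X] [CompactSpace X] (hM : IsFuzzyMetric M luk)
    (hgen : GeneratesTopology M) (μ ν : Measure X) [IsProbabilityMeasure μ]
    [IsProbabilityMeasure ν] {t : ℝ} (ht : 0 < t) : (prokSet M μ ν t).Nonempty := by
  have hX := nonempty_of_isProbabilityMeasure μ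
  obtain ⟨c, hc₀, hc⟩ := hM.exists_pos_le hgen ht
  obtain ⟨x⟩ := hX
  have hc₁ : c ≤ 1 := (hc x x).trans (hM.le_one x x t ht)
  exact ⟨1 - c / 2, mem_prokSet_of_forall_lt (by linarith) (by linarith)
    fun x y => by linarith [hc x y]⟩

lemma add_mem_prokSet {μ ν : Measure X} {r t₁ t₂ ε : ℝ} (hε : 0 ≤ ε)
    (hcmp : ∀ x y, M x y t₁ ≤ M x y t₂ + ε) (hr : r ∈ prokSet M μ ν t₁) (hrε : r + ε < 1) :
    r + ε ∈ prokSet M μ ν t₂ := by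
  refine ⟨by linarith [hr.1], hrε, fun A hA => ?_⟩
  have hsub := measure_mono (μ := ν) (fmExpand_subset_fmExpand hcmp A r)
  have hsub' := measure_mono (μ := μ) (fmExpand_subset_fmExpand hcmp A r)
  have hof : ENNReal.ofReal r ≤ ENNReal.ofReal (r + ε) := ENNReal.ofReal_le_ofReal (by linarith)
  obtain ⟨hμ, hν⟩ := hr.2.2 A hA
  exact ⟨hμ.trans (add_le_add hsub hof), hν.trans (add_le_add hsub' hof)⟩

lemma sInf_prokSet_le_one (μ ν : Measure X) (t : ℝ) : sInf (prokSet M μ ν t) ≤ 1 := by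
  rcases (prokSet M μ ν t).eq_empty_or_nonempty with h | ⟨r, hr⟩
  · rw [h, Real.sInf_empty]
    exact zero_le_one
  · exact (csInf_le ⟨0, fun _ h => h.1.le⟩ hr).trans hr.2.1.le

lemma fuzzyProkhorov_sub_le {μ ν : Measure X} {t₁ t₂ ε : ℝ} (hε : 0 ≤ ε)
    (hcmp : ∀ x y, M x y t₁ ≤ M x y t₂ + ε) (hne : (prokSet M μ ν t₁).Nonempty) :
    fuzzyProkhorov M μ ν t₁ - ε ≤ fuzzyProkhorov M μ ν t₂ := by
  suffices ∀ r ∈ prokSet M μ ν t₁, sInf (prokSet M μ ν t₂) - ε ≤ r by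
    have := le_csInf hne this
    unfold fuzzyProkhorov
    linarith
  intro r hr
  rcases lt_or_ge (r + ε) 1 with hrε | hrε
  · linarith [csInf_le ⟨0, fun _ h => h.1.le⟩ (add_mem_prokSet hε hcmp hr hrε)]
  · linarith [sInf_prokSet_le_one (M := M) μ ν t₂]

end Prokhorov

theorem fuzzyProkhorov_continuousOn_general {X : Type*} [TopologicalSpace X] [CompactSpace X]
    [MeasurableSpace X]
    (M : X → X → ℝ → ℝ) (hM : IsFuzzyMetric M luk) (hgen : GeneratesTopology M)
    (μ ν : ProbabilityMeasure X) :
    ContinuousOn (fun t => fuzzyProkhorov M (μ : Measure X) (ν : Measure X) t)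
      (Ioi (0:ℝ)) := by
  intro t₀ ht₀
  have hunif := tendstoUniformly_nhds_of_forall_continuousAt
    (f := fun q : ℝ × (X × X) => M q.2.1 q.2.2 q.1) fun _ =>
      (hM.continuousOn_uncurry hgen).continuousAt (prod_mem_nhds (Ioi_mem_nhds ht₀) univ_mem)
  refine Metric.tendsto_nhds.mpr fun ε hε => ?_
  filter_upwards [self_mem_nhdsWithin,
    nhdsWithin_le_nhds (Metric.tendstoUniformly_iff.mp hunif (ε / 2) (half_pos hε))]
    with t ht hclose
  have hcmp : ∀ x y, |M x y t₀ - M x y t| < ε / 2 := fun x y => hclose (x, y)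
  have h₁ := fuzzyProkhorov_sub_le (μ := (μ : Measure X)) (ν := (ν : Measure X)) (t₂ := t₀)
    (half_pos hε).le (fun x y => by linarith [(abs_lt.mp (hcmp x y)).1])
    (prokSet_nonempty hM hgen _ _ ht)
  have h₂ := fuzzyProkhorov_sub_le (μ := (μ : Measure X)) (ν := (ν : Measure X)) (t₂ := t)
    (half_pos hε).le (fun x y => by linarith [(abs_lt.mp (hcmp x y)).2])
    (prokSet_nonempty hM hgen _ _ ht₀)
  rw [Real.dist_eq, abs_lt]
  constructor <;> linarith

/-- `t ↦ M̂(μ,ν,t)` is continuous on `(0,∞)`. -/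
theorem fuzzyProkhorov_continuousOn {X : Type*} [TopologicalSpace X] [CompactSpace X]
    [MeasurableSpace X] [BorelSpace X]
    (M : X → X → ℝ → ℝ) (hM : IsFuzzyMetric M luk) (hgen : GeneratesTopology M)
    (μ ν : ProbabilityMeasure X) :
    ContinuousOn (fun t => fuzzyProkhorov M (μ : Measure X) (ν : Measure X) t)
      (Ioi (0:ℝ)) :=
  fuzzyProkhorov_continuousOn_general M hM hgen μ ν
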